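/- For (a,b,c) ∈ k³ \ {(0,0,0)}, the left Λ-module M(a,b,c) satisfies Ext¹_Λ(M(a,b,c), Λ) = 0 if and only if a ≠ 0 and a + b ≠ 0. -/

import Mathlib

open CategoryTheory Limits Opposite

/-- The algebra `Λ = Λ(q)` of Ringel–Zhang: a `k`-algebra with distinguished elements
`x, y, z` satisfying the defining relations
`x² = y² = z² = 0`, `yz = 0`, `xy + q·yx = 0`, `xz = zx`, `zy = zx`,
and admitting the `k`-basis `{1, x, y, z, yx, zx}`.
Any such algebra is canonically isomorphic to the quotient of the free algebra
`k⟨x,y,z⟩` by the two-sided ideal generated by these relations. -/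
structure LambdaAlg (k : Type) [Field k] (q : k) (Λ : Type) [Ring Λ] [Algebra k Λ] :
    Type where
  x : Λ
  y : Λ
  z : Λ
  hxx : x * x = 0
  hyy : y * y = 0
  hzz : z * z = 0
  hyz : y * z = 0
  hxy : x * y + q • (y * x) = 0
  hxz : x * z - z * x = 0
  hzy : z * y - z * x = 0
  basis : Module.Basis (Fin 6) k Λ
  hb0 : basis 0 = 1
  hb1 : basis 1 = x
  hb2 : basis 2 = y
  hb3 : basis 3 = z
  hb4 : basis 4 = y * x
  hb5 : basis 5 = z * x

namespace LambdaAlg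

variable {k : Type} [Field k] {q : k} {Λ : Type} [Ring Λ] [Algebra k Λ]

/-- The element `ax + by + cz` of `Λ`. -/
def w (D : LambdaAlg k q Λ) (a b c : k) : Λ := a • D.x + b • D.y + c • D.z

/-- The left ideal `U(a,b,c) = Λ(ax+by+cz) + Λ·yx + Λ·zx` of `Λ`. -/
def U (D : LambdaAlg k q Λ) (a b c : k) : Submodule Λ Λ :=
  Submodule.span Λ {D.w a b c, D.y * D.x, D.z * D.x}

/-- The left `Λ`-module `M(a,b,c) = Λ/U(a,b,c)`. -/
abbrev M (D : LambdaAlg k q Λ) (a b c : k) : Type := Λ ⧸ D.U a b c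

/-- The right ideal `U′(a,b,c) = (ax+by+cz)Λ + yx·Λ + zx·Λ` of `Λ`,
viewed as a `Λᵐᵒᵖ`-submodule of `Λ`. -/
def U' (D : LambdaAlg k q Λ) (a b c : k) : Submodule Λᵐᵒᵖ Λ :=
  Submodule.span Λᵐᵒᵖ {D.w a b c, D.y * D.x, D.z * D.x}

/-- The right `Λ`-module `M′(a,b,c) = Λ/U′(a,b,c)` (a module over `Λᵐᵒᵖ`). -/
abbrev M' (D : LambdaAlg k q Λ) (a b c : k) : Type := Λ ⧸ D.U' a b c

/-- The `k`-subspace `{m ∈ M : x·m = y·m = z·m = 0}` of a left `Λ`-module `M`;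
since `x, y, z` generate `rad Λ` and every simple `Λ`-module is isomorphic to `k`,
this is the socle of `M`. -/
def ann (D : LambdaAlg k q Λ) (M : Type) [AddCommGroup M] [Module k M] [Module Λ M]
    [IsScalarTower k Λ M] : Submodule k M where
  carrier := {m | D.x • m = 0 ∧ D.y • m = 0 ∧ D.z • m = 0}
  add_mem' := by
    rintro a b ⟨h1, h2, h3⟩ ⟨g1, g2, g3⟩
    simp [smul_add, h1, h2, h3, g1, g2, g3]
  zero_mem' := by simp
  smul_mem' := by
    rintro a m ⟨h1, h2, h3⟩
    refine ⟨?_, ?_, ?_⟩ <;> rw [smul_comm] <;> simp [h1, h2, h3]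

/-- The submodule `(rad Λ)·M = x·M + y·M + z·M` of a left `Λ`-module `M`. -/
def radM (D : LambdaAlg k q Λ) (M : Type) [AddCommGroup M] [Module Λ M] :
    Submodule Λ M :=
  Submodule.span Λ
    (Set.range (fun m : M => D.x • m) ∪ Set.range (fun m : M => D.y • m) ∪
      Set.range (fun m : M => D.z • m))

end LambdaAlg

/-- A module is indecomposable if it is nonzero and is not the direct sum of two
nonzero submodules. -/
def IsIndecomposable (R : Type) [Ring R] (M : Type) [AddCommGroup M] [Module R M] :
    Prop :=
  Nontrivial M ∧
    ∀ N₁ N₂ : Submodule R M, N₁ ⊓ N₂ = ⊥ → N₁ ⊔ N₂ = ⊤ → N₁ = ⊥ ∨ N₂ = ⊥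

/-- A module is torsionless if it admits an injective linear map into a finite free
module. -/
def IsTorsionless (R : Type) [Ring R] (M : Type) [AddCommGroup M] [Module R M] : Prop :=
  ∃ (n : ℕ) (f : M →ₗ[R] (Fin n → R)), Function.Injective f

/-- The canonical evaluation map `M → M** = Hom_{Λᵒᵖ}(Hom_Λ(M, Λ), Λ)`,
sending `m` to `f ↦ f m`. -/
def evalMap (Λ : Type) [Ring Λ] (M : Type) [AddCommGroup M] [Module Λ M] :
    M → ((M →ₗ[Λ] Λ) →ₗ[Λᵐᵒᵖ] Λ) := fun m =>
  { toFun := fun f => f m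
    map_add' := fun _ _ => rfl
    map_smul' := fun _ _ => rfl }

/-- The transformation `ω′(a,b,c) = (a, q⁻¹b, −((a+q⁻¹b)/a)·c)` on triples. -/
def omegaPrime {k : Type} [Field k] (q : k) (t : k × k × k) : k × k × k :=
  (t.1, q⁻¹ * t.2.1, -((t.1 + q⁻¹ * t.2.1) / t.1) * t.2.2)

/-!
Resolving `Λ ⧸ U` freely, starting with `Λ` itself, identifies `Ext¹(Λ ⧸ U, Λ)` with the cokernel
of the restriction `Hom(Λ, Λ) → Hom(U, Λ)`: it vanishes iff every `Λ`-linear `F : U → Λ` is a right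
multiplication `u ↦ u * t`. Such an `F` is determined by `F w`, `F (yx)`, `F (zx)`, and `xw`, `yw`,
`zw` impose `x F(w) = -qb F(yx) + c F(zx)`, `y F(w) = a F(yx)`, `z F(w) = (a + b) F(zx)`.
If `a ≠ 0` and `a + b ≠ 0`, comparing coefficients shows that `F(yx)`, `F(zx)` are the same
multiple `λ` of `yx`, `zx` and `F w ∈ λ w + soc Λ`, which is realised by a right multiplication.
If `a = 0` (resp. `a + b = 0`), the relation for `y` (resp. `z`) no longer ties `F(yx)`
(resp. `F(zx)`) to `F w`, and there are maps scaling `yx` and `zx` differently, which no right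
multiplication does; these are restrictions of `k`-linear maps on `Λ` that commute with the
generators `x, y, z` on `U`.
-/

universe v

section ExtensionProperty

variable {R : Type*} [Ring R] {F G V N : Type*} [AddCommGroup F] [Module R F] [AddCommGroup G]
  [Module R G] [AddCommGroup V] [Module R V] [AddCommGroup N] [Module R N]

lemma LinearMap.exists_comp_eq_of_surjective {S : Type*} [AddCommGroup S] [Module R S]
    {π : F →ₗ[R] S} (hπ : Function.Surjective π) {φ : F →ₗ[R] N}
    (h : LinearMap.ker π ≤ LinearMap.ker φ) : ∃ f : S →ₗ[R] N, f ∘ₗ π = φ :=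
  ⟨(LinearMap.ker π).liftQ φ h ∘ₗ (π.quotKerEquivOfSurjective hπ).symm.toLinearMap, by
    ext x
    simp [LinearMap.quotKerEquivOfSurjective_symm_apply]⟩

theorem Submodule.forall_exists_comp_subtype_eq_iff {S : Submodule R V} {d : F →ₗ[R] V}
    (hd : LinearMap.range d = S) {e : G →ₗ[R] F} (he : LinearMap.range e = LinearMap.ker d) :
    (∀ f : S →ₗ[R] N, ∃ g : V →ₗ[R] N, g ∘ₗ S.subtype = f) ↔
      ∀ φ : F →ₗ[R] N, φ ∘ₗ e = 0 → ∃ ψ : V →ₗ[R] N, ψ ∘ₗ d = φ := by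
  set d' := d.codRestrict S fun x => hd ▸ LinearMap.mem_range_self d x
  have hdd' : S.subtype ∘ₗ d' = d := LinearMap.subtype_comp_codRestrict _ _ _
  have hd' : Function.Surjective d' := by
    rintro ⟨s, hs⟩
    obtain ⟨x, rfl⟩ := hd ▸ hs
    exact ⟨x, rfl⟩
  have hker : LinearMap.ker d' = LinearMap.range e := by
    rw [he, ← hdd', LinearMap.ker_comp_of_ker_eq_bot _ S.ker_subtype]
  constructor
  · intro H φ hφ
    obtain ⟨f, rfl⟩ := LinearMap.exists_comp_eq_of_surjective hd' (φ := φ) (by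
      rw [hker, LinearMap.range_le_ker_iff, hφ])
    obtain ⟨g, rfl⟩ := H f
    exact ⟨g, by rw [← hdd', LinearMap.comp_assoc]⟩
  · intro H f
    have hd'e : d' ∘ₗ e = 0 := LinearMap.range_le_ker_iff.1 hker.ge
    obtain ⟨ψ, hψ⟩ := H (f ∘ₗ d') (by rw [LinearMap.comp_assoc, hd'e, LinearMap.comp_zero])
    refine ⟨ψ, (LinearMap.cancel_right hd').1 ?_⟩
    rw [LinearMap.comp_assoc, hdd', hψ]

end ExtensionProperty

lemma ModuleCat.forall_exists_comp_eq_iff {R : Type*} [Ring R] {X₀ X₁ X₂ N : ModuleCat.{v} R}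
    (d : X₁ ⟶ X₀) (e : X₂ ⟶ X₁) :
    (∀ φ : X₁ ⟶ N, e ≫ φ = 0 → ∃ ψ : X₀ ⟶ N, d ≫ ψ = φ) ↔
      ∀ φ : X₁ →ₗ[R] N, φ ∘ₗ e.hom = 0 → ∃ ψ : X₀ →ₗ[R] N, ψ ∘ₗ d.hom = φ := by
  refine ⟨fun H φ hφ => ?_, fun H φ hφ => ?_⟩
  · obtain ⟨ψ, hψ⟩ := H (ModuleCat.ofHom φ) (ModuleCat.hom_ext hφ)
    exact ⟨ψ.hom, congr(ModuleCat.Hom.hom $hψ)⟩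
  · obtain ⟨ψ, hψ⟩ := H φ.hom congr(ModuleCat.Hom.hom $hφ)
    exact ⟨ModuleCat.ofHom ψ, ModuleCat.hom_ext hψ⟩

namespace Submodule

variable {R : Type} [Ring R] {V : Type} [AddCommGroup V] [Module R V]

/-- Stage `n` of a free resolution of `V ⧸ S`: the module `Xₙ` (with `X₀ = V`) together with the
image of `Xₙ₊₁ → Xₙ`; the module `Xₙ₊₁` is free on that image. -/
noncomputable def syzygy (S : Submodule R V) : ℕ → Σ X : ModuleCat R, Submodule R X
  | 0 => ⟨ModuleCat.of R V, S⟩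
  | n + 1 => ⟨ModuleCat.of R ((syzygy S n).2 →₀ R),
      LinearMap.ker (Finsupp.linearCombination R ((↑) : (syzygy S n).2 → (syzygy S n).1))⟩

variable (S : Submodule R V)

noncomputable def syzygyD (n : ℕ) : (S.syzygy (n + 1)).1 ⟶ (S.syzygy n).1 :=
  ModuleCat.ofHom (Finsupp.linearCombination R ((↑) : (S.syzygy n).2 → (S.syzygy n).1))

lemma range_syzygyD (n : ℕ) : LinearMap.range (S.syzygyD n).hom = (S.syzygy n).2 := by
  change LinearMap.range (Finsupp.linearCombination R _) = _
  rw [Finsupp.range_linearCombination, Subtype.range_coe, span_eq]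

lemma range_syzygyD_succ (n : ℕ) :
    LinearMap.range (S.syzygyD (n + 1)).hom = LinearMap.ker (S.syzygyD n).hom :=
  S.range_syzygyD (n + 1)

noncomputable def syzygyComplex : ChainComplex (ModuleCat R) ℕ :=
  ChainComplex.of (fun n => (S.syzygy n).1) S.syzygyD fun n => by
    ext v
    change (S.syzygyD (n + 1)).hom v ∈ LinearMap.ker (S.syzygyD n).hom
    exact S.range_syzygyD_succ n ▸ LinearMap.mem_range_self _ v

lemma syzygyComplex_d (n : ℕ) : S.syzygyComplex.d (n + 1) n = S.syzygyD n :=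
  ChainComplex.of_d (fun n => (S.syzygy n).1) S.syzygyD n

lemma syzygyComplex_exactAt_succ (n : ℕ) : S.syzygyComplex.ExactAt (n + 1) := by
  rw [HomologicalComplex.exactAt_iff' _ (n + 2) (n + 1) n (by simp) (by simp),
    ShortComplex.moduleCat_exact_iff_range_eq_ker]
  change LinearMap.range (S.syzygyComplex.d (n + 2) (n + 1)).hom =
    LinearMap.ker (S.syzygyComplex.d (n + 1) n).hom
  rw [syzygyComplex_d, syzygyComplex_d]
  exact S.range_syzygyD_succ n

noncomputable def quotientResolution [Module.Projective R V] :
    ProjectiveResolution (ModuleCat.of R (V ⧸ S)) where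
  complex := S.syzygyComplex
  projective
    | 0 => inferInstanceAs (Projective (ModuleCat.of R V))
    | _ + 1 => ModuleCat.projective_of_free Finsupp.basisSingleOne
  π := (ChainComplex.toSingle₀Equiv _ _).symm ⟨ModuleCat.ofHom S.mkQ, by
    ext v
    exact (Quotient.mk_eq_zero S).2 ((S.range_syzygyD 0).le (LinearMap.mem_range_self _ v))⟩
  quasiIso := ⟨fun n => by
    cases n with
    | zero =>
      rw [ChainComplex.quasiIsoAt₀_iff, ShortComplex.quasiIso_iff_of_zeros']
      · refine ⟨?_, ?_⟩
        · rw [ShortComplex.moduleCat_exact_iff_range_eq_ker]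
          change LinearMap.range (S.syzygyD 0).hom = LinearMap.ker S.mkQ
          rw [range_syzygyD, ker_mkQ]
          rfl
        · change Epi (ModuleCat.ofHom S.mkQ)
          exact (ModuleCat.epi_iff_surjective _).2 S.mkQ_surjective
      all_goals rfl
    | succ n =>
      rw [quasiIsoAt_iff_exactAt' _ _ (ChainComplex.exactAt_succ_single_obj _ _)]
      exact S.syzygyComplex_exactAt_succ n⟩

theorem isZero_Ext_one_quotient_iff (k : Type) [Field k] [Algebra k R] [Module.Projective R V]
    (N : ModuleCat.{0} R) :
    IsZero (((Ext k (ModuleCat R) 1).obj (op (ModuleCat.of R (V ⧸ S)))).obj N) ↔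
      ∀ f : S →ₗ[R] N, ∃ g : V →ₗ[R] N, g ∘ₗ S.subtype = f := by
  rw [(S.quotientResolution.isoExt 1 N).isZero_iff,
    ← HomologicalComplex.exactAt_iff_isZero_homology,
    HomologicalComplex.exactAt_iff' _ 0 1 2 (by simp) (by simp), ShortComplex.moduleCat_exact_iff]
  change (∀ φ : (S.syzygy 1).1 ⟶ N, S.syzygyD 1 ≫ φ = 0 →
    ∃ ψ : (S.syzygy 0).1 ⟶ N, S.syzygyD 0 ≫ ψ = φ) ↔ _
  rw [ModuleCat.forall_exists_comp_eq_iff]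
  exact (forall_exists_comp_subtype_eq_iff (S.range_syzygyD 0) (S.range_syzygyD_succ 0)).symm

end Submodule

section AdjoinGenerators

variable {k A M N : Type*} [CommRing k] [Ring A] [Algebra k A] [AddCommGroup M] [Module A M]
  [Module k M] [IsScalarTower k A M] [AddCommGroup N] [Module A N] [Module k N]
  [IsScalarTower k A N] {s : Set A}

theorem LinearMap.map_smul_of_adjoin_eq_top (hs : Algebra.adjoin k s = ⊤) (f : M →ₗ[k] N)
    (h : ∀ a ∈ s, ∀ m, f (a • m) = a • f m) (a : A) (m : M) : f (a • m) = a • f m := by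
  induction (hs ▸ Algebra.mem_top : a ∈ Algebra.adjoin k s) using Algebra.adjoin_induction
    generalizing m with
  | mem a ha => exact h a ha m
  | algebraMap r => simp only [algebraMap_smul, map_smul]
  | add a b _ _ ha hb => simp only [add_smul, map_add, ha, hb]
  | mul a b _ _ ha hb => simp only [mul_smul, ha, hb]

theorem Submodule.restrictScalars_span_eq_of_adjoin_eq_top (hs : Algebra.adjoin k s = ⊤)
    {t : Set M} (h : ∀ a ∈ s, ∀ m ∈ t, a • m ∈ span k t) :
    (span A t).restrictScalars k = span k t := by
  have hsmul (a : A) : ∀ m ∈ span k t, a • m ∈ span k t := by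
    induction (hs ▸ Algebra.mem_top : a ∈ Algebra.adjoin k s) using
      Algebra.adjoin_induction with
    | mem a ha =>
      intro m hm
      induction hm using span_induction with
      | mem m hm => exact h a ha m hm
      | zero => simp
      | add m n _ _ hm hn => rw [smul_add]; exact add_mem hm hn
      | smul r m _ hm => rw [smul_comm]; exact smul_mem _ r hm
    | algebraMap r => intro m hm; rw [algebraMap_smul]; exact smul_mem _ r hm
    | add a b _ _ ha hb => intro m hm; rw [add_smul]; exact add_mem (ha m hm) (hb m hm)
    | mul a b _ _ ha hb => intro m hm; rw [mul_smul]; exact ha _ (hb m hm)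
  let P : Submodule A M := { span k t with smul_mem' := hsmul }
  exact le_antisymm (span_le.2 subset_span : span A t ≤ P) (span_le_restrictScalars k A t)

end AdjoinGenerators

namespace LambdaAlg

variable {k : Type} [Field k] {q : k} {Λ : Type} [Ring Λ] [Algebra k Λ] (D : LambdaAlg k q Λ)

lemma x_mul_y : D.x * D.y = -(q • (D.y * D.x)) := eq_neg_of_add_eq_zero_left D.hxy
lemma x_mul_z : D.x * D.z = D.z * D.x := sub_eq_zero.1 D.hxz
lemma z_mul_y : D.z * D.y = D.z * D.x := sub_eq_zero.1 D.hzy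

lemma x_mul_yx : D.x * (D.y * D.x) = 0 := by
  rw [← mul_assoc, x_mul_y, neg_mul, smul_mul_assoc, mul_assoc, D.hxx, mul_zero, smul_zero,
    neg_zero]
lemma y_mul_yx : D.y * (D.y * D.x) = 0 := by rw [← mul_assoc, D.hyy, zero_mul]
lemma z_mul_yx : D.z * (D.y * D.x) = 0 := by rw [← mul_assoc, z_mul_y, mul_assoc, D.hxx, mul_zero]
lemma x_mul_zx : D.x * (D.z * D.x) = 0 := by rw [← mul_assoc, x_mul_z, mul_assoc, D.hxx, mul_zero]
lemma y_mul_zx : D.y * (D.z * D.x) = 0 := by rw [← mul_assoc, D.hyz, zero_mul]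
lemma z_mul_zx : D.z * (D.z * D.x) = 0 := by rw [← mul_assoc, D.hzz, zero_mul]
lemma yx_mul_x : D.y * D.x * D.x = 0 := by rw [mul_assoc, D.hxx, mul_zero]
lemma yx_mul_y : D.y * D.x * D.y = 0 := by
  rw [mul_assoc, x_mul_y, mul_neg, mul_smul_comm, ← mul_assoc, D.hyy, zero_mul, smul_zero,
    neg_zero]
lemma yx_mul_z : D.y * D.x * D.z = 0 := by rw [mul_assoc, x_mul_z, ← mul_assoc, D.hyz, zero_mul]
lemma zx_mul_x : D.z * D.x * D.x = 0 := by rw [mul_assoc, D.hxx, mul_zero]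
lemma zx_mul_y : D.z * D.x * D.y = 0 := by
  rw [mul_assoc, x_mul_y, mul_neg, mul_smul_comm, ← mul_assoc, z_mul_y, mul_assoc, D.hxx,
    mul_zero, smul_zero, neg_zero]
lemma zx_mul_z : D.z * D.x * D.z = 0 := by rw [mul_assoc, x_mul_z, ← mul_assoc, D.hzz, zero_mul]

lemma sum_repr (v : Λ) :
    D.basis.repr v 0 • 1 + D.basis.repr v 1 • D.x + D.basis.repr v 2 • D.y +
      D.basis.repr v 3 • D.z + D.basis.repr v 4 • (D.y * D.x) +
      D.basis.repr v 5 • (D.z * D.x) = v := by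
  have h := D.basis.sum_repr v
  rwa [Fin.sum_univ_six, D.hb0, D.hb1, D.hb2, D.hb3, D.hb4, D.hb5] at h

lemma eq_zero_of_sum_eq_zero {c₀ c₁ c₂ c₃ c₄ c₅ : k}
    (h : c₀ • (1 : Λ) + c₁ • D.x + c₂ • D.y + c₃ • D.z + c₄ • (D.y * D.x) + c₅ • (D.z * D.x) = 0) :
    c₀ = 0 ∧ c₁ = 0 ∧ c₂ = 0 ∧ c₃ = 0 ∧ c₄ = 0 ∧ c₅ = 0 := by
  have := Fintype.linearIndependent_iff.1 D.basis.linearIndependent ![c₀, c₁, c₂, c₃, c₄, c₅]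
    (by simpa [Fin.sum_univ_six, D.hb0, D.hb1, D.hb2, D.hb3, D.hb4, D.hb5] using h)
  exact ⟨this 0, this 1, this 2, this 3, this 4, this 5⟩

lemma eq_zero_of_smul_yx_add_smul_zx {α β : k}
    (h : α • (D.y * D.x) + β • (D.z * D.x) = 0) : α = 0 ∧ β = 0 := by
  obtain ⟨-, -, -, -, h4, h5⟩ := D.eq_zero_of_sum_eq_zero (c₀ := 0) (c₁ := 0) (c₂ := 0) (c₃ := 0)
    (by rw [← h]; module)
  exact ⟨h4, h5⟩

lemma adjoin_eq_top : Algebra.adjoin k {D.x, D.y, D.z} = ⊤ := by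
  refine eq_top_iff.2 fun v _ => D.sum_repr v ▸ ?_
  have hx : D.x ∈ Algebra.adjoin k {D.x, D.y, D.z} := Algebra.subset_adjoin (by simp)
  have hy : D.y ∈ Algebra.adjoin k {D.x, D.y, D.z} := Algebra.subset_adjoin (by simp)
  have hz : D.z ∈ Algebra.adjoin k {D.x, D.y, D.z} := Algebra.subset_adjoin (by simp)
  repeat' apply_rules [Subalgebra.add_mem, Subalgebra.smul_mem, Subalgebra.one_mem,
    Subalgebra.mul_mem]

lemma x_mul (v : Λ) : D.x * v = D.basis.repr v 0 • D.x + (-(q * D.basis.repr v 2)) • (D.y * D.x)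
    + D.basis.repr v 3 • (D.z * D.x) := by
  conv_lhs => rw [← D.sum_repr v]
  simp only [mul_add, mul_smul_comm, mul_one, D.hxx, x_mul_y, x_mul_z, x_mul_yx, x_mul_zx]
  module

lemma y_mul (v : Λ) : D.y * v = D.basis.repr v 0 • D.y + D.basis.repr v 1 • (D.y * D.x) := by
  conv_lhs => rw [← D.sum_repr v]
  simp only [mul_add, mul_smul_comm, mul_one, D.hyy, D.hyz, y_mul_yx, y_mul_zx]
  module

lemma z_mul (v : Λ) :
    D.z * v = D.basis.repr v 0 • D.z + (D.basis.repr v 1 + D.basis.repr v 2) • (D.z * D.x) := by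
  conv_lhs => rw [← D.sum_repr v]
  simp only [mul_add, mul_smul_comm, mul_one, D.hzz, z_mul_y, z_mul_yx, z_mul_zx]
  module

lemma yx_mul (v : Λ) : D.y * D.x * v = D.basis.repr v 0 • (D.y * D.x) := by
  conv_lhs => rw [← D.sum_repr v]
  simp only [mul_add, mul_smul_comm, mul_one, yx_mul_x, yx_mul_y, yx_mul_z, ← mul_assoc, zero_mul]
  module

lemma zx_mul (v : Λ) : D.z * D.x * v = D.basis.repr v 0 • (D.z * D.x) := by
  conv_lhs => rw [← D.sum_repr v]
  simp only [mul_add, mul_smul_comm, mul_one, zx_mul_x, zx_mul_y, zx_mul_z, ← mul_assoc, zero_mul]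
  module

variable (a b c : k)

lemma w_mem : D.w a b c ∈ D.U a b c := Submodule.subset_span (by simp)
lemma yx_mem : D.y * D.x ∈ D.U a b c := Submodule.subset_span (by simp)
lemma zx_mem : D.z * D.x ∈ D.U a b c := Submodule.subset_span (by simp)

lemma x_mul_w : D.x * D.w a b c = (-(q * b)) • (D.y * D.x) + c • (D.z * D.x) := by
  simp only [w, mul_add, mul_smul_comm, D.hxx, x_mul_y, x_mul_z]
  module

lemma y_mul_w : D.y * D.w a b c = a • (D.y * D.x) := by
  simp only [w, mul_add, mul_smul_comm, D.hyy, D.hyz]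
  module

lemma z_mul_w : D.z * D.w a b c = (a + b) • (D.z * D.x) := by
  simp only [w, mul_add, mul_smul_comm, D.hzz, z_mul_y]
  module

lemma w_mul_y : D.w a b c * D.y = (-(a * q)) • (D.y * D.x) + c • (D.z * D.x) := by
  simp only [w, add_mul, smul_mul_assoc, D.hyy, x_mul_y, z_mul_y]
  module

lemma w_mul_z : D.w a b c * D.z = a • (D.z * D.x) := by
  simp only [w, add_mul, smul_mul_assoc, D.hzz, x_mul_z, D.hyz]
  module

lemma map_w_relations (F : D.U a b c →ₗ[Λ] Λ) :
    D.x * F ⟨_, D.w_mem a b c⟩ =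
        (-(q * b)) • F ⟨_, D.yx_mem a b c⟩ + c • F ⟨_, D.zx_mem a b c⟩ ∧
      D.y * F ⟨_, D.w_mem a b c⟩ = a • F ⟨_, D.yx_mem a b c⟩ ∧
      D.z * F ⟨_, D.w_mem a b c⟩ = (a + b) • F ⟨_, D.zx_mem a b c⟩ := by
  have hF (g : Λ) : g * F ⟨_, D.w_mem a b c⟩ = F (g • ⟨_, D.w_mem a b c⟩) :=
    (F.map_smul g _).symm
  simp only [hF, ← F.map_smul_of_tower, ← map_add]
  refine ⟨congrArg F ?_, congrArg F ?_, congrArg F ?_⟩ <;> ext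
  exacts [D.x_mul_w a b c, D.y_mul_w a b c, D.z_mul_w a b c]

variable {a b c}

lemma exists_eq_of_relations (hq : q ≠ 0) (ha : a ≠ 0) (hab : a + b ≠ 0) {u v s : Λ}
    (hx : D.x * u = (-(q * b)) • v + c • s) (hy : D.y * u = a • v)
    (hz : D.z * u = (a + b) • s) :
    ∃ l ε ζ : k, u = l • D.w a b c + ε • (D.y * D.x) + ζ • (D.z * D.x) ∧
      v = l • (D.y * D.x) ∧ s = l • (D.z * D.x) := by
  have hu := D.sum_repr u
  rw [D.x_mul] at hx
  rw [D.y_mul] at hy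
  rw [D.z_mul] at hz
  generalize D.basis.repr u = r at hu hx hy hz
  have hv : v = a⁻¹ • (r 0 • D.y + r 1 • (D.y * D.x)) := by
    rw [hy, smul_smul, inv_mul_cancel₀ ha, one_smul]
  have hs : s = (a + b)⁻¹ • (r 0 • D.z + (r 1 + r 2) • (D.z * D.x)) := by
    rw [hz, smul_smul, inv_mul_cancel₀ hab, one_smul]
  rw [hv, hs] at hx
  obtain ⟨-, h0, -, -, h4, h5⟩ := D.eq_zero_of_sum_eq_zero (c₀ := 0) (c₁ := r 0)
    (c₂ := q * b * a⁻¹ * r 0) (c₃ := -(c * (a + b)⁻¹ * r 0))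
    (c₄ := -(q * r 2) + q * b * a⁻¹ * r 1) (c₅ := r 3 - c * (a + b)⁻¹ * (r 1 + r 2))
    (by linear_combination (norm := module) hx)
  have h2 : r 2 = b * a⁻¹ * r 1 := mul_left_cancel₀ hq (by linear_combination -h4)
  have h12 : r 1 + r 2 = (a + b) * (a⁻¹ * r 1) := by
    rw [h2]
    field_simp
  have h3 : r 3 = c * a⁻¹ * r 1 := by
    rw [sub_eq_zero.1 h5, h12]
    field_simp
  refine ⟨a⁻¹ * r 1, r 4, r 5, ?_, by rw [hv, h0]; module, ?_⟩
  · rw [← hu, w, h0, h2, h3]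
    match_scalars <;> field_simp
  · rw [hs, h0, h12, zero_smul, zero_add, smul_smul, inv_mul_cancel_left₀ hab]

lemma exists_mul_eq (hq : q ≠ 0) (ha : a ≠ 0) (l ε ζ : k) :
    ∃ t : Λ, D.w a b c * t = l • D.w a b c + ε • (D.y * D.x) + ζ • (D.z * D.x) ∧
      D.y * D.x * t = l • (D.y * D.x) ∧ D.z * D.x * t = l • (D.z * D.x) := by
  refine ⟨l • 1 + (-(ε / (a * q))) • D.y + ((ζ + ε / (a * q) * c) / a) • D.z, ?_, ?_, ?_⟩ <;>
    simp only [mul_add, mul_smul_comm, mul_one, w_mul_y, w_mul_z, yx_mul_y, yx_mul_z,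
      zx_mul_y, zx_mul_z, smul_zero, add_zero]
  match_scalars <;> field_simp
  ring

theorem exists_extension (hq : q ≠ 0) (ha : a ≠ 0) (hab : a + b ≠ 0)
    (F : D.U a b c →ₗ[Λ] Λ) : ∃ g : Λ →ₗ[Λ] Λ, g ∘ₗ (D.U a b c).subtype = F := by
  obtain ⟨hx, hy, hz⟩ := D.map_w_relations a b c F
  obtain ⟨l, ε, ζ, hu, hv, hs⟩ := D.exists_eq_of_relations hq ha hab hx hy hz
  obtain ⟨t, hwt, hyxt, hzxt⟩ := D.exists_mul_eq hq ha l ε ζ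
  refine ⟨LinearMap.toSpanSingleton Λ Λ t,
    LinearMap.ext_on Submodule.span_span_coe_preimage ?_⟩
  rintro ⟨u, hu'⟩ (rfl | rfl | rfl)
  · exact hwt.trans hu.symm
  · exact hyxt.trans hv.symm
  · exact hzxt.trans hs.symm

variable (f₀ f₁ f₂ f₃ f₄ f₅ : Λ)

lemma constr_x : D.basis.constr k ![f₀, f₁, f₂, f₃, f₄, f₅] D.x = f₁ := by
  rw [← D.hb1, Module.Basis.constr_basis]
  rfl

lemma constr_y : D.basis.constr k ![f₀, f₁, f₂, f₃, f₄, f₅] D.y = f₂ := by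
  rw [← D.hb2, Module.Basis.constr_basis]
  rfl

lemma constr_z : D.basis.constr k ![f₀, f₁, f₂, f₃, f₄, f₅] D.z = f₃ := by
  rw [← D.hb3, Module.Basis.constr_basis]
  rfl

lemma constr_yx : D.basis.constr k ![f₀, f₁, f₂, f₃, f₄, f₅] (D.y * D.x) = f₄ := by
  rw [← D.hb4, Module.Basis.constr_basis]
  rfl

lemma constr_zx : D.basis.constr k ![f₀, f₁, f₂, f₃, f₄, f₅] (D.z * D.x) = f₅ := by
  rw [← D.hb5, Module.Basis.constr_basis]
  rfl

lemma exists_smul_of_linearMap (g : Λ →ₗ[Λ] Λ) :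
    ∃ r : k, g (D.y * D.x) = r • (D.y * D.x) ∧ g (D.z * D.x) = r • (D.z * D.x) := by
  refine ⟨D.basis.repr (g 1) 0, ?_, ?_⟩
  · have h := g.map_smul (D.y * D.x) 1
    rwa [smul_eq_mul, smul_eq_mul, mul_one, D.yx_mul] at h
  · have h := g.map_smul (D.z * D.x) 1
    rwa [smul_eq_mul, smul_eq_mul, mul_one, D.zx_mul] at h

lemma restrictScalars_U :
    (D.U a b c).restrictScalars k = Submodule.span k {D.w a b c, D.y * D.x, D.z * D.x} := by
  refine Submodule.restrictScalars_span_eq_of_adjoin_eq_top D.adjoin_eq_top ?_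
  have hyx : D.y * D.x ∈ Submodule.span k {D.w a b c, D.y * D.x, D.z * D.x} :=
    Submodule.subset_span (by simp)
  have hzx : D.z * D.x ∈ Submodule.span k {D.w a b c, D.y * D.x, D.z * D.x} :=
    Submodule.subset_span (by simp)
  rintro g (rfl | rfl | rfl) m (rfl | rfl | rfl) <;>
    simp only [smul_eq_mul, x_mul_w, y_mul_w, z_mul_w, x_mul_yx, y_mul_yx, z_mul_yx, x_mul_zx,
      y_mul_zx, z_mul_zx] <;>
    first
    | exact zero_mem _
    | exact Submodule.smul_mem _ _ hyx
    | exact Submodule.smul_mem _ _ hzx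
    | exact add_mem (Submodule.smul_mem _ _ hyx) (Submodule.smul_mem _ _ hzx)

lemma exists_linearMap_of_commute (G : Λ →ₗ[k] Λ)
    (hG : ∀ g ∈ ({D.x, D.y, D.z} : Set Λ), ∀ m ∈ ({D.w a b c, D.y * D.x, D.z * D.x} : Set Λ),
      G (g * m) = g * G m) :
    ∃ F : D.U a b c →ₗ[Λ] Λ, ∀ u, F u = G u := by
  have hcomm (g : Λ) (hg : g ∈ ({D.x, D.y, D.z} : Set Λ)) (u : D.U a b c) :
      G (g * u) = g * G u := by
    suffices ∀ m ∈ Submodule.span k {D.w a b c, D.y * D.x, D.z * D.x}, G (g * m) = g * G m from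
      this u (D.restrictScalars_U ▸ u.2)
    intro m hm
    induction hm using Submodule.span_induction with
    | mem m hm => exact hG g hg m hm
    | zero => simp
    | add m n _ _ hm hn => rw [mul_add, map_add, map_add, hm, hn, mul_add]
    | smul r m _ hm => rw [mul_smul_comm, map_smul, map_smul, hm, mul_smul_comm]
  let G' : D.U a b c →ₗ[k] Λ := G ∘ₗ (D.U a b c).subtype.restrictScalars k
  exact ⟨{ G' with map_smul' := G'.map_smul_of_adjoin_eq_top D.adjoin_eq_top hcomm },
    fun _ => rfl⟩

lemma exists_hom_of_eq_zero (ha : a = 0) :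
    ∃ F : D.U a b c →ₗ[Λ] Λ, F ⟨_, D.yx_mem a b c⟩ = D.z * D.x ∧ F ⟨_, D.zx_mem a b c⟩ = 0 := by
  obtain ⟨F, hF⟩ := D.exists_linearMap_of_commute (a := a) (b := b) (c := c)
    (D.basis.constr k ![0, 0, (-q) • D.z, 0, D.z * D.x, 0]) (by
      rintro g (rfl | rfl | rfl) m (rfl | rfl | rfl) <;>
        simp only [x_mul_w, y_mul_w, z_mul_w, x_mul_yx, y_mul_yx, z_mul_yx, x_mul_zx,
          y_mul_zx, z_mul_zx] <;>
        simp only [w, map_add, map_smul, map_zero, constr_x, constr_y, constr_z, constr_yx,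
          constr_zx, mul_add, mul_smul_comm, mul_zero, x_mul_z, D.hyz, D.hzz, x_mul_zx,
          y_mul_zx, z_mul_zx, ha] <;>
        module)
  exact ⟨F, by rw [hF, constr_yx], by rw [hF, constr_zx]⟩

lemma exists_hom_of_add_eq_zero (hab : a + b = 0) :
    ∃ F : D.U a b c →ₗ[Λ] Λ, F ⟨_, D.yx_mem a b c⟩ = 0 ∧ F ⟨_, D.zx_mem a b c⟩ = D.z * D.x := by
  obtain ⟨F, hF⟩ := D.exists_linearMap_of_commute (a := a) (b := b) (c := c)
    (D.basis.constr k ![0, 0, 0, D.z, 0, D.z * D.x]) (by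
      rintro g (rfl | rfl | rfl) m (rfl | rfl | rfl) <;>
        simp only [x_mul_w, y_mul_w, z_mul_w, x_mul_yx, y_mul_yx, z_mul_yx, x_mul_zx,
          y_mul_zx, z_mul_zx] <;>
        simp only [w, map_add, map_smul, map_zero, constr_x, constr_y, constr_z, constr_yx,
          constr_zx, mul_add, mul_smul_comm, mul_zero, x_mul_z, D.hyz, D.hzz, x_mul_zx,
          y_mul_zx, z_mul_zx, hab] <;>
        module)
  exact ⟨F, by rw [hF, constr_yx], by rw [hF, constr_zx]⟩

theorem not_forall_extension (h : a = 0 ∨ a + b = 0) :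
    ¬ ∀ F : D.U a b c →ₗ[Λ] Λ, ∃ g : Λ →ₗ[Λ] Λ, g ∘ₗ (D.U a b c).subtype = F := by
  intro H
  have hscalar (F : D.U a b c →ₗ[Λ] Λ) :
      ∃ r : k, F ⟨_, D.yx_mem a b c⟩ = r • (D.y * D.x) ∧ F ⟨_, D.zx_mem a b c⟩ = r • (D.z * D.x) := by
    obtain ⟨g, rfl⟩ := H F
    exact D.exists_smul_of_linearMap g
  rcases h with ha | hab
  · obtain ⟨F, hyx, -⟩ := D.exists_hom_of_eq_zero (c := c) ha
    obtain ⟨r, hr, -⟩ := hscalar F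
    have := (D.eq_zero_of_smul_yx_add_smul_zx (α := r) (β := -1) (by rw [← hr, hyx]; module)).2
    exact one_ne_zero (neg_eq_zero.1 this)
  · obtain ⟨F, hyx, hzx⟩ := D.exists_hom_of_add_eq_zero (c := c) hab
    obtain ⟨r, hr₁, hr₂⟩ := hscalar F
    have hr : r = 0 := (D.eq_zero_of_smul_yx_add_smul_zx (β := 0) (by rw [← hr₁, hyx]; module)).1
    rw [hr, zero_smul] at hr₂
    exact one_ne_zero (D.eq_zero_of_smul_yx_add_smul_zx (α := 0) (β := 1)
      (by rw [← hr₂, hzx]; module)).2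

theorem forall_extension_iff (hq : q ≠ 0) :
    (∀ F : D.U a b c →ₗ[Λ] Λ, ∃ g : Λ →ₗ[Λ] Λ, g ∘ₗ (D.U a b c).subtype = F) ↔
      a ≠ 0 ∧ a + b ≠ 0 := by
  refine ⟨fun H => ?_, fun h => D.exists_extension hq h.1 h.2⟩
  by_contra hne
  exact D.not_forall_extension (by tauto) H

end LambdaAlg

theorem statement9_general (k : Type) [Field k] (q : k) (hq : q ≠ 0)
    (Λ : Type) [Ring Λ] [Algebra k Λ] (D : LambdaAlg k q Λ)
    (a b c : k) :
    IsZero (((Ext k (ModuleCat Λ) 1).obj (op (ModuleCat.of Λ (D.M a b c)))).obj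
        (ModuleCat.of Λ Λ))
    ↔ a ≠ 0 ∧ a + b ≠ 0 := by
  rw [Submodule.isZero_Ext_one_quotient_iff]
  exact D.forall_extension_iff hq

/-- `Ext¹_Λ(M(a,b,c), Λ) = 0` if and only if `a ≠ 0` and `a + b ≠ 0`. -/
theorem statement9 (k : Type) [Field k] (q : k) (hq : q ≠ 0)
    (Λ : Type) [Ring Λ] [Algebra k Λ] (D : LambdaAlg k q Λ)
    (a b c : k) (h : (a, b, c) ≠ (0, 0, 0)) :
    IsZero (((Ext k (ModuleCat Λ) 1).obj (op (ModuleCat.of Λ (D.M a b c)))).obj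
        (ModuleCat.of Λ Λ))
    ↔ a ≠ 0 ∧ a + b ≠ 0 :=
  statement9_general k q hq Λ D a b c
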